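/- arXiv:1611.00965 — 2 statements merged into one kernel-verified Lean document; each statement's English description precedes it below -/
import Mathlib

section
/- Define C_k = Σ_{t=1}^{n−k} z_t z_{t+k} for 0 ≤ k ≤ n−1, D_{i,j} = Σ_{t=0}^{n+1−i−j} z_{i+t} z_{j+t} (an empty sum being 0), and E_{i,j} = C_{|i−j|} − D_{i,j}. Then (a) E_{1,j} = 0 for every j with 1 ≤ j ≤ n, and (b) for all i, j with 1 ≤ i ≤ j and i + j ≤ n, the recursion E_{i+1,j+1} = E_{i,j} + z_i z_j + z_{n+1−i} z_{n+1−j} holds. Hence the Champernowne matrix satisfies D = C − E with E computable sequentially. -/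
open Finset

/-- `C_k = Σ_{t=1}^{n−k} z_t z_{t+k}`. -/
noncomputable def champC (n : ℕ) (z : ℕ → ℝ) (k : ℕ) : ℝ :=
  ∑ t ∈ Finset.Icc 1 (n - k), z t * z (t + k)

/-- Champernowne matrix entries (1-based):
`D_{i,j} = Σ_{t=0}^{n+1−i−j} z_{i+t} z_{j+t}` (an empty sum being `0`). -/
noncomputable def champD (n : ℕ) (z : ℕ → ℝ) (i j : ℕ) : ℝ :=
  ∑ t ∈ Finset.range (n + 2 - i - j), z (i + t) * z (j + t)

/-- `E_{i,j} = C_{|i−j|} − D_{i,j}`. -/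
noncomputable def champE (n : ℕ) (z : ℕ → ℝ) (i j : ℕ) : ℝ :=
  champC n z (Nat.dist i j) - champD n z i j

/-- With `C_k = Σ_{t=1}^{n−k} z_t z_{t+k}`, `D_{i,j} = Σ_{t=0}^{n+1−i−j} z_{i+t} z_{j+t}`
and `E_{i,j} = C_{|i−j|} − D_{i,j}`:  (a) `E_{1,j} = 0` for `1 ≤ j ≤ n`, and
(b) for `1 ≤ i ≤ j` with `i + j ≤ n`, the recursion
`E_{i+1,j+1} = E_{i,j} + z_i z_j + z_{n+1−i} z_{n+1−j}` holds.
Hence `D = C − E` with `E` computable sequentially. -/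
theorem champE_first_row_and_recursion (n : ℕ) (hn : 1 ≤ n) (z : ℕ → ℝ) :
    (∀ j : ℕ, 1 ≤ j → j ≤ n → champE n z 1 j = 0) ∧
    (∀ i j : ℕ, 1 ≤ i → i ≤ j → i + j ≤ n →
      champE n z (i + 1) (j + 1) =
        champE n z i j + z i * z j + z (n + 1 - i) * z (n + 1 - j)) := by

  constructor
  · intro j hj hjn
    have hdist : Nat.dist 1 j = j - 1 := by
      unfold Nat.dist; omega
    have h1 : n + 2 - 1 - j = n + 1 - j := by omega
    unfold champE champC champD
    rw [hdist, h1]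
    have : n - (j - 1) = n + 1 - j := by omega
    rw [this]
    rw [show Finset.Icc 1 (n + 1 - j) = Finset.Ico 1 (n + 1 - j + 1) by
      rw [Finset.Ico_add_one_right_eq_Icc]]
    rw [Finset.sum_Ico_eq_sum_range]
    have h2 : n + 1 - j + 1 - 1 = n + 1 - j := by omega
    rw [h2]
    have : ∀ t, z (1 + t) * z (1 + t + (j - 1)) = z (1 + t) * z (j + t) := by
      intro t
      congr 2
      omega
    rw [Finset.sum_congr rfl fun t _ => this t]
    ring
  · intro i j hi hij hijn
    have hdist : Nat.dist (i + 1) (j + 1) = Nat.dist i j := by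
      unfold Nat.dist; omega
    have key : champD n z i j =
        z i * z j + z (n + 1 - i) * z (n + 1 - j) + champD n z (i + 1) (j + 1) := by
      unfold champD
      set k := n - i - j with hk
      have h1 : n + 2 - i - j = k + 1 + 1 := by omega
      have h2 : n + 2 - (i + 1) - (j + 1) = k := by omega
      rw [h1, h2, Finset.sum_range_succ, Finset.sum_range_succ']
      have hlast : z (i + (k + 1)) * z (j + (k + 1)) =
          z (n + 1 - j) * z (n + 1 - i) := by
        congr 2 <;> omega
      have hfirst : z (i + 0) * z (j + 0) = z i * z j := by norm_num
      have hmid : ∀ t, z (i + (t + 1)) * z (j + (t + 1)) =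
          z (i + 1 + t) * z (j + 1 + t) := by
        intro t; congr 2 <;> omega
      rw [hlast, hfirst, Finset.sum_congr rfl fun t _ => hmid t]
      ring
    unfold champE
    rw [hdist, key]
    ring
end

section
/- Let γ : ℕ → ℝ be extended to negative indices by γ_{−k} = γ_k, and suppose γ satisfies γ_k = Σ_{j=1}^{p} φ_j γ_{k−j} for all integers k ≥ 1 and γ₀ − Σ_{j=1}^{p} φ_j γ_j = 1. Let Γₙ be the n×n symmetric Toeplitz matrix with (i,j)-entry γ_{|i−j|}. If n ≥ 2p, then Γₙ · (Γ̇ₙ − Ω) = Iₙ; that is, the inverse of the AR(p) covariance matrix (with σ_a² = 1) is Γₙ⁻¹ = Γ̇ₙ − Ω (eq. (8), the Zinde-Walsh inverse formula). -/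
open Matrix Finset

/-- `c₀ = 1` and `c_l = −φ_l` for `l ≥ 1`. -/
noncomputable def cCoef (φ : ℕ → ℝ) (l : ℕ) : ℝ := if l = 0 then 1 else -φ l

/-- Autocovariances of `u_t = φ(B)a_t`:
`γ_k^{(u)} = Σ_{l=0}^{p−k} c_l c_{l+k}` for `0 ≤ k ≤ p`, and `0` for `k > p`. -/
noncomputable def gammaU (p : ℕ) (φ : ℕ → ℝ) (k : ℕ) : ℝ :=
  if k ≤ p then ∑ l ∈ Finset.range (p - k + 1), cCoef φ l * cCoef φ (l + k) else 0

/-- The `n×n` symmetric Toeplitz matrix `Γ̇ₙ` with `(i,j)`-entry `γ_{|i−j|}^{(u)}`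
(1-based indices of the paper correspond to `Fin` values plus one). -/
noncomputable def GammaDot (n p : ℕ) (φ : ℕ → ℝ) : Matrix (Fin n) (Fin n) ℝ :=
  Matrix.of fun i j => gammaU p φ (Nat.dist i.val j.val)

/-- Corner entries: `Ω_{i,j} = Σ_{k=min(i,j)}^{p−|i−j|} φ_k φ_{k+|i−j|}`
for 1-based `i, j` (an empty sum being `0`). -/
noncomputable def OmegaEntry (p : ℕ) (φ : ℕ → ℝ) (i j : ℕ) : ℝ :=
  ∑ k ∈ Finset.Icc (min i j) (p - Nat.dist i j), φ k * φ (k + Nat.dist i j)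

/-- The matrix `Ω`: zero except for the `p×p` block `Ω_{i,j}` in the upper-left corner
and its mirror image `Ω_{n+1−i,n+1−j} = Ω_{i,j}` in the lower-right corner.
(For `n ≥ 2p` the two corner blocks are disjoint.) -/
noncomputable def OmegaMat (n p : ℕ) (φ : ℕ → ℝ) : Matrix (Fin n) (Fin n) ℝ :=
  Matrix.of fun i j =>
    (if i.val + 1 ≤ p ∧ j.val + 1 ≤ p then OmegaEntry p φ (i.val + 1) (j.val + 1) else 0) +
    (if n ≤ i.val + p ∧ n ≤ j.val + p then OmegaEntry p φ (n - i.val) (n - j.val) else 0)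

/-- The `n×n` symmetric Toeplitz matrix `Γₙ` with `(i,j)`-entry `γ_{|i−j|}`. -/
noncomputable def toeplitzCov (γ : ℕ → ℝ) (n : ℕ) : Matrix (Fin n) (Fin n) ℝ :=
  Matrix.of fun i j => γ (Nat.dist i.val j.val)

/- helpers -/

lemma zwSum_shift (f : ℤ → ℝ) (a b t : ℤ) :
    ∑ x ∈ Finset.Ico a b, f (x + t) = ∑ x ∈ Finset.Ico (a+t) (b+t), f x := by
  refine Finset.sum_nbij' (fun x => x + t) (fun x => x - t) ?_ ?_ ?_ ?_ ?_ <;>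
    (intro x hx; simp only [Finset.mem_Ico] at *; try omega)

lemma zwSum_reflect (f : ℤ → ℝ) (a b t : ℤ) :
    ∑ x ∈ Finset.Ico a b, f (t - x) = ∑ x ∈ Finset.Ico (t-b+1) (t-a+1), f x := by
  refine Finset.sum_nbij' (fun x => t - x) (fun x => t - x) ?_ ?_ ?_ ?_ ?_ <;>
    (intro x hx; simp only [Finset.mem_Ico] at *; try omega) <;> (dsimp only; try omega)

lemma zwSum_cast (f : ℤ → ℝ) (a b : ℕ) :
    ∑ x ∈ Finset.Ico (a:ℤ) (b:ℤ), f x = ∑ x ∈ Finset.Ico a b, f ↑x := by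
  refine Finset.sum_nbij' (fun x => x.toNat) (fun x => (x:ℤ)) ?_ ?_ ?_ ?_ ?_
  · intro x hx; simp only [Finset.mem_Ico] at *; omega
  · intro x hx; simp only [Finset.mem_Ico] at *; omega
  · intro x hx; simp only [Finset.mem_Ico] at hx; omega
  · intro x hx; simp only [Finset.mem_Ico] at hx; omega
  · intro x hx; simp only [Finset.mem_Ico] at hx
    rw [Int.toNat_of_nonneg (by omega)]

lemma zwSum_support (f : ℤ → ℝ) {lo hi a b a' b' : ℤ}
    (hsupp : ∀ x, f x ≠ 0 → lo ≤ x ∧ x < hi)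
    (ha : a ≤ lo) (hb : hi ≤ b) (ha' : a' ≤ lo) (hb' : hi ≤ b') :
    ∑ x ∈ Finset.Ico a b, f x = ∑ x ∈ Finset.Ico a' b', f x := by
  have key : ∀ u v : ℤ, u ≤ lo → hi ≤ v →
      ∑ x ∈ Finset.Ico u v, f x = ∑ x ∈ Finset.Ico lo hi, f x := by
    intro u v hu hv
    symm
    apply Finset.sum_subset
    · intro x hx; simp only [Finset.mem_Ico] at *; omega
    · intro x _ hx
      by_contra hfx
      exact hx (Finset.mem_Ico.2 (hsupp x hfx))
  rw [key a b ha hb, key a' b' ha' hb']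

lemma zwIco01 : Finset.Ico (0:ℤ) 1 = {0} := by
  ext x; simp only [Finset.mem_Ico, Finset.mem_singleton]; omega

/- the c coefficients -/

noncomputable def zwCn (p : ℕ) (φ : ℕ → ℝ) (l : ℕ) : ℝ := if l ≤ p then cCoef φ l else 0

noncomputable def zwC (p : ℕ) (φ : ℕ → ℝ) (t : ℤ) : ℝ :=
  if 0 ≤ t ∧ t ≤ (p:ℤ) then cCoef φ t.toNat else 0

lemma zwC_coe (p : ℕ) (φ : ℕ → ℝ) (l : ℕ) : zwC p φ l = zwCn p φ l := by
  unfold zwC zwCn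
  by_cases h : l ≤ p
  · rw [if_pos ⟨by positivity, by exact_mod_cast h⟩, if_pos h, Int.toNat_natCast]
  · rw [if_neg (by omega), if_neg h]

lemma zwC_neg (p : ℕ) (φ : ℕ → ℝ) {t : ℤ} (h : t < 0) : zwC p φ t = 0 := by
  unfold zwC; rw [if_neg (by omega)]

lemma zwC_big (p : ℕ) (φ : ℕ → ℝ) {t : ℤ} (h : (p:ℤ) < t) : zwC p φ t = 0 := by
  unfold zwC; rw [if_neg (by omega)]

lemma zwC_zero (p : ℕ) (φ : ℕ → ℝ) : zwC p φ 0 = 1 := by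
  unfold zwC
  rw [if_pos ⟨le_refl _, by positivity⟩]
  simp [cCoef]

lemma zwSum_Ico_consec (f : ℤ → ℝ) {a b c : ℤ} (h1 : a ≤ b) (h2 : b ≤ c) :
    ((∑ x ∈ Finset.Ico a b, f x) + ∑ x ∈ Finset.Ico b c, f x) = ∑ x ∈ Finset.Ico a c, f x := by
  rw [← Finset.sum_union (Finset.Ico_disjoint_Ico_consecutive a b c),
    Finset.Ico_union_Ico_eq_Ico h1 h2]

/- the w and h functions -/

noncomputable def zwW (p : ℕ) (φ γ : ℕ → ℝ) (t : ℤ) : ℝ :=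
  ∑ l ∈ Finset.Ico (0:ℤ) ((p:ℤ)+1), zwC p φ l * γ (t - l).natAbs

noncomputable def zwH (p : ℕ) (φ γ : ℕ → ℝ) (t : ℤ) : ℝ :=
  ∑ l ∈ Finset.Ico (0:ℤ) ((p:ℤ)+1), zwC p φ l * zwW p φ γ (t + l)

lemma zwW_eq (p : ℕ) (φ γ : ℕ → ℝ) (t : ℤ) :
    zwW p φ γ t = γ t.natAbs - ∑ j ∈ Finset.Icc 1 p, φ j * γ (t - (j:ℤ)).natAbs := by
  unfold zwW
  rw [← zwSum_Ico_consec _ (show (0:ℤ) ≤ 1 by norm_num)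
      (show (1:ℤ) ≤ (p:ℤ)+1 by omega)]
  rw [zwIco01, Finset.sum_singleton, zwC_zero, sub_zero, one_mul]
  have h1 : ∑ l ∈ Finset.Ico (1:ℤ) ((p:ℤ)+1), zwC p φ l * γ (t - l).natAbs
      = ∑ l ∈ Finset.Ico 1 (p+1), zwC p φ (l:ℤ) * γ (t - (l:ℤ)).natAbs := by
    rw [show ((p:ℤ)+1) = (((p+1:ℕ)):ℤ) by push_cast; ring,
      show (1:ℤ) = ((1:ℕ):ℤ) by norm_num]
    exact zwSum_cast (fun x => zwC p φ x * γ (t - x).natAbs) 1 (p+1)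
  rw [h1, Finset.Ico_add_one_right_eq_Icc]
  have h2 : ∀ l ∈ Finset.Icc 1 p, zwC p φ (l:ℤ) * γ (t - (l:ℤ)).natAbs
      = -(φ l * γ (t - (l:ℤ)).natAbs) := by
    intro l hl
    simp only [Finset.mem_Icc] at hl
    rw [zwC_coe]
    unfold zwCn cCoef
    rw [if_pos hl.2, if_neg (by omega)]
    ring
  rw [Finset.sum_congr rfl h2, Finset.sum_neg_distrib]
  ring

lemma zwW_pos (p : ℕ) (φ γ : ℕ → ℝ)
    (hrec : ∀ k : ℤ, 1 ≤ k →
      γ k.natAbs = ∑ j ∈ Finset.Icc 1 p, φ j * γ (k - (j : ℤ)).natAbs)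
    {t : ℤ} (ht : 1 ≤ t) : zwW p φ γ t = 0 := by
  rw [zwW_eq, ← hrec t ht, sub_self]

lemma zwW_zero (p : ℕ) (φ γ : ℕ → ℝ)
    (hnorm : γ 0 - ∑ j ∈ Finset.Icc 1 p, φ j * γ j = 1) :
    zwW p φ γ 0 = 1 := by
  rw [zwW_eq]
  have : ∀ j ∈ Finset.Icc 1 p, φ j * γ ((0:ℤ) - (j:ℤ)).natAbs = φ j * γ j := by
    intro j _
    have h0 : ((0:ℤ) - (j:ℤ)).natAbs = j := by omega
    rw [h0]
  rw [Finset.sum_congr rfl this]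
  simpa using hnorm

lemma zwH_expand (p : ℕ) (φ γ : ℕ → ℝ) (s : ℤ) :
    zwH p φ γ s = ∑ l ∈ Finset.Ico (0:ℤ) ((p:ℤ)+1), ∑ l' ∈ Finset.Ico (0:ℤ) ((p:ℤ)+1),
      zwC p φ l * zwC p φ l' * γ (s + l - l').natAbs := by
  unfold zwH zwW
  refine Finset.sum_congr rfl fun l _ => ?_
  rw [Finset.mul_sum]
  refine Finset.sum_congr rfl fun l' _ => ?_
  ring

lemma zwH_symm (p : ℕ) (φ γ : ℕ → ℝ) (t : ℤ) : zwH p φ γ (-t) = zwH p φ γ t := by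
  rw [zwH_expand, zwH_expand, Finset.sum_comm]
  refine Finset.sum_congr rfl fun a _ => Finset.sum_congr rfl fun b _ => ?_
  have : (-t + b - a).natAbs = (t + a - b).natAbs := by omega
  rw [this]; ring

lemma zwH_delta (p : ℕ) (hp : 1 ≤ p) (φ γ : ℕ → ℝ)
    (hrec : ∀ k : ℤ, 1 ≤ k →
      γ k.natAbs = ∑ j ∈ Finset.Icc 1 p, φ j * γ (k - (j : ℤ)).natAbs)
    (hnorm : γ 0 - ∑ j ∈ Finset.Icc 1 p, φ j * γ j = 1)
    (t : ℤ) : zwH p φ γ t = if t = 0 then 1 else 0 := by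
  have hpos : ∀ s : ℤ, 1 ≤ s → zwH p φ γ s = 0 := by
    intro s hs
    unfold zwH
    apply Finset.sum_eq_zero
    intro l hl
    simp only [Finset.mem_Ico] at hl
    rw [zwW_pos p φ γ hrec (by omega), mul_zero]
  rcases lt_trichotomy t 0 with h | h | h
  · rw [if_neg (by omega), ← zwH_symm, hpos _ (by omega)]
  · subst h
    rw [if_pos rfl]
    unfold zwH
    rw [← zwSum_Ico_consec _ (show (0:ℤ) ≤ 1 by norm_num) (show (1:ℤ) ≤ (p:ℤ)+1 by omega),
      zwIco01, Finset.sum_singleton, zwC_zero, one_mul, zero_add,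
      zwW_zero p φ γ hnorm]
    have : ∀ l ∈ Finset.Ico (1:ℤ) ((p:ℤ)+1), zwC p φ l * zwW p φ γ (0 + l) = 0 := by
      intro l hl
      simp only [Finset.mem_Ico] at hl
      rw [zwW_pos p φ γ hrec (by omega), mul_zero]
    rw [Finset.sum_congr rfl this, Finset.sum_const, smul_zero, add_zero]
  · rw [if_neg (by omega), hpos _ (by omega)]

/- the S sums and entry formula -/

noncomputable def zwS (p : ℕ) (φ : ℕ → ℝ) (d N : ℕ) : ℝ :=
  ∑ l ∈ Finset.range N, zwCn p φ l * zwCn p φ (l+d)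

lemma zwCn_big (p : ℕ) (φ : ℕ → ℝ) {l : ℕ} (h : p < l) : zwCn p φ l = 0 := by
  unfold zwCn; rw [if_neg (by omega)]

lemma zwS_stab (p : ℕ) (φ : ℕ → ℝ) {d M N : ℕ} (h : p < M + d) (hMN : M ≤ N) :
    zwS p φ d N = zwS p φ d M := by
  symm
  apply Finset.sum_subset (Finset.range_subset_range.2 hMN)
  intro l _ hl
  simp only [Finset.mem_range, not_lt] at hl
  rw [zwCn_big p φ (show p < l + d by omega), mul_zero]

lemma zwCn_mul_phi (p : ℕ) (φ : ℕ → ℝ) {l d : ℕ} (h1 : 1 ≤ l) (h2 : l + d ≤ p) :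
    zwCn p φ l * zwCn p φ (l+d) = φ l * φ (l+d) := by
  unfold zwCn cCoef
  rw [if_pos (show l ≤ p by omega), if_pos h2, if_neg (by omega), if_neg (by omega)]
  ring

lemma zwC_coe_add (p : ℕ) (φ : ℕ → ℝ) (l d : ℕ) :
    zwC p φ ((l:ℤ) + (d:ℤ)) = zwCn p φ (l+d) := by
  rw [show ((l:ℤ) + (d:ℤ)) = ((l+d : ℕ):ℤ) by push_cast; ring, zwC_coe]

noncomputable def zwM (n p : ℕ) (φ : ℕ → ℝ) (j k : ℕ) : ℝ :=
  gammaU p φ (Nat.dist j k) -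
    ((if j+1 ≤ p ∧ k+1 ≤ p then OmegaEntry p φ (j+1) (k+1) else 0) +
     (if n ≤ j+p ∧ n ≤ k+p then OmegaEntry p φ (n-j) (n-k) else 0))

noncomputable def zwR (n p : ℕ) (φ : ℕ → ℝ) (k : ℕ) (j : ℤ) : ℝ :=
  (∑ m ∈ Finset.Ico (0:ℤ) (n:ℤ), zwC p φ (j - m) * zwC p φ ((k:ℤ) - m)) -
   ∑ m ∈ Finset.Ico (n:ℤ) ((n:ℤ)+(p:ℤ)), zwC p φ (m - j) * zwC p φ (m - (k:ℤ))

lemma zwR_first (n p : ℕ) (φ : ℕ → ℝ) (j k : ℕ) (hj : j < n) (hjk : j ≤ k) :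
    ∑ m ∈ Finset.Ico (0:ℤ) (n:ℤ), zwC p φ ((j:ℤ) - m) * zwC p φ ((k:ℤ) - m)
      = zwS p φ (k - j) (j+1) := by
  set d := k - j with hd
  have hkd : (k:ℤ) = (j:ℤ) + (d:ℤ) := by omega
  have step1 : ∑ m ∈ Finset.Ico (0:ℤ) (n:ℤ), zwC p φ ((j:ℤ) - m) * zwC p φ ((k:ℤ) - m)
      = ∑ m ∈ Finset.Ico (0:ℤ) ((j:ℤ)+1), zwC p φ ((j:ℤ) - m) * zwC p φ ((k:ℤ) - m) := by
    symm
    apply Finset.sum_subset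
    · intro x hx; simp only [Finset.mem_Ico] at *; omega
    · intro x hx hx'
      simp only [Finset.mem_Ico] at hx hx'
      rw [zwC_neg p φ (show (j:ℤ) - x < 0 by omega), zero_mul]
  rw [step1]
  have step2 : ∑ m ∈ Finset.Ico (0:ℤ) ((j:ℤ)+1), zwC p φ ((j:ℤ) - m) * zwC p φ ((k:ℤ) - m)
      = ∑ m ∈ Finset.Ico (0:ℤ) ((j:ℤ)+1),
          (fun s => zwC p φ s * zwC p φ (s + (d:ℤ))) ((j:ℤ) - m) := by
    refine Finset.sum_congr rfl fun m _ => ?_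
    have : (k:ℤ) - m = ((j:ℤ) - m) + (d:ℤ) := by omega
    rw [this]
  rw [step2, zwSum_reflect (fun s => zwC p φ s * zwC p φ (s + (d:ℤ))) 0 ((j:ℤ)+1) (j:ℤ)]
  have hIco : Finset.Ico ((j:ℤ)-((j:ℤ)+1)+1) ((j:ℤ)-0+1) = Finset.Ico ((0:ℕ):ℤ) ((j+1:ℕ):ℤ) := by
    congr 1 <;> push_cast <;> ring
  rw [hIco, zwSum_cast]
  rw [show Finset.Ico 0 (j+1) = Finset.range (j+1) by rw [Finset.range_eq_Ico]]
  unfold zwS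
  refine Finset.sum_congr rfl fun l _ => ?_
  rw [zwC_coe, zwC_coe_add]

lemma zwR_second (n p : ℕ) (φ : ℕ → ℝ) (j k : ℕ) (hk : k < n) (hjk : j ≤ k) :
    ∑ m ∈ Finset.Ico (n:ℤ) ((n:ℤ)+(p:ℤ)), zwC p φ (m - (j:ℤ)) * zwC p φ (m - (k:ℤ))
      = zwS p φ (k - j) (n-k+p) - zwS p φ (k - j) (n-k) := by
  set d := k - j with hd
  have step1 : ∑ m ∈ Finset.Ico (n:ℤ) ((n:ℤ)+(p:ℤ)), zwC p φ (m - (j:ℤ)) * zwC p φ (m - (k:ℤ))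
      = ∑ m ∈ Finset.Ico (n:ℤ) ((n:ℤ)+(p:ℤ)),
          (fun s => zwC p φ s * zwC p φ (s + (d:ℤ))) (m + (-(k:ℤ))) := by
    refine Finset.sum_congr rfl fun m _ => ?_
    have h1 : m - (j:ℤ) = (m + (-(k:ℤ))) + (d:ℤ) := by omega
    have h2 : m - (k:ℤ) = m + (-(k:ℤ)) := by ring
    rw [h1, h2]
    ring
  rw [step1, zwSum_shift (fun s => zwC p φ s * zwC p φ (s + (d:ℤ))) (n:ℤ) ((n:ℤ)+(p:ℤ)) (-(k:ℤ))]
  have hIco : Finset.Ico ((n:ℤ)+(-(k:ℤ))) ((n:ℤ)+(p:ℤ)+(-(k:ℤ)))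
      = Finset.Ico (((n-k:ℕ)):ℤ) (((n-k+p:ℕ)):ℤ) := by
    congr 1 <;> omega
  rw [hIco, zwSum_cast]
  have step2 : ∑ l ∈ Finset.Ico (n-k) (n-k+p),
      (fun s => zwC p φ s * zwC p φ (s + (d:ℤ))) ((l:ℕ):ℤ)
      = ∑ l ∈ Finset.Ico (n-k) (n-k+p), zwCn p φ l * zwCn p φ (l+d) := by
    refine Finset.sum_congr rfl fun l _ => ?_
    dsimp only
    rw [zwC_coe, zwC_coe_add]
  rw [step2, Finset.sum_Ico_eq_sub _ (show n-k ≤ n-k+p by omega)]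
  rfl

lemma zwClaim1_le (p n : ℕ) (hp : 1 ≤ p) (hn : 2*p ≤ n) (φ : ℕ → ℝ)
    (j k : ℕ) (hj : j < n) (hk : k < n) (hjk : j ≤ k) :
    zwM n p φ j k = zwR n p φ k ↑j := by
  set d := k - j with hd
  have hdist : Nat.dist j k = d := Nat.dist_eq_sub_of_le hjk
  have hdist1 : Nat.dist (j+1) (k+1) = d := by simp [Nat.dist]; omega
  have hdist2 : Nat.dist (n-j) (n-k) = d := by simp [Nat.dist]; omega
  have hmin1 : min (j+1) (k+1) = j+1 := by omega
  have hmin2 : min (n-j) (n-k) = n-k := by omega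
  unfold zwM zwR OmegaEntry
  rw [zwR_first n p φ j k hj hjk, zwR_second n p φ j k hk hjk,
    hdist, hdist1, hdist2, hmin1, hmin2, ← hd]
  by_cases hdp : d ≤ p
  · -- d ≤ p
    have hgam : gammaU p φ d = zwS p φ d (p-d+1) := by
      unfold gammaU zwS
      rw [if_pos hdp]
      refine Finset.sum_congr rfl fun l hl => ?_
      simp only [Finset.mem_range] at hl
      unfold zwCn
      rw [if_pos (by omega), if_pos (by omega)]
    rw [hgam]
    by_cases hA : j+1 ≤ p ∧ k+1 ≤ p
    · have hOA : ∑ l ∈ Finset.Icc (j+1) (p-d), φ l * φ (l+d)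
          = zwS p φ d (p-d+1) - zwS p φ d (j+1) := by
        unfold zwS
        rw [← Finset.sum_Ico_eq_sub _ (show j+1 ≤ p-d+1 by omega), ← Finset.Ico_add_one_right_eq_Icc]
        refine Finset.sum_congr rfl fun l hl => ?_
        simp only [Finset.mem_Ico] at hl
        rw [zwCn_mul_phi p φ (by omega) (by omega)]
      rw [if_pos hA, if_neg (show ¬(n ≤ j+p ∧ n ≤ k+p) by omega), hOA,
        zwS_stab p φ (show p < (n-k) + d by omega) (show n-k ≤ n-k+p by omega)]
      ring
    · by_cases hB : n ≤ j + p
      · have hOB : ∑ l ∈ Finset.Icc (n-k) (p-d), φ l * φ (l+d)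
            = zwS p φ d (p-d+1) - zwS p φ d (n-k) := by
          unfold zwS
          rw [← Finset.sum_Ico_eq_sub _ (show n-k ≤ p-d+1 by omega), ← Finset.Ico_add_one_right_eq_Icc]
          refine Finset.sum_congr rfl fun l hl => ?_
          simp only [Finset.mem_Ico] at hl
          rw [zwCn_mul_phi p φ (by omega) (by omega)]
        rw [if_neg hA, if_pos (show n ≤ j+p ∧ n ≤ k+p by omega), hOB,
          zwS_stab p φ (show p < (p-d+1) + d by omega) (show p-d+1 ≤ j+1 by omega),
          zwS_stab p φ (show p < (p-d+1) + d by omega) (show p-d+1 ≤ n-k+p by omega)]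
        ring
      · have hkp : p ≤ k := by omega
        rw [if_neg hA, if_neg (show ¬(n ≤ j+p ∧ n ≤ k+p) by omega),
          zwS_stab p φ (show p < (p-d+1) + d by omega) (show p-d+1 ≤ j+1 by omega),
          zwS_stab p φ (show p < (n-k) + d by omega) (show n-k ≤ n-k+p by omega)]
        ring
  · -- p < d
    have hgam : gammaU p φ d = 0 := by unfold gammaU; rw [if_neg hdp]
    have hS : ∀ N, zwS p φ d N = 0 := by
      intro N
      apply Finset.sum_eq_zero
      intro l _
      rw [zwCn_big p φ (show p < l + d by omega), mul_zero]
    have hI1 : Finset.Icc (j+1) (p-d) = ∅ := Finset.Icc_eq_empty (by omega)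
    have hI2 : Finset.Icc (n-k) (p-d) = ∅ := Finset.Icc_eq_empty (by omega)
    rw [hgam, hS, hS, hS, hI1, hI2, Finset.sum_empty, ite_self, ite_self]
    norm_num

lemma zwOmegaEntry_symm (p : ℕ) (φ : ℕ → ℝ) (a b : ℕ) :
    OmegaEntry p φ a b = OmegaEntry p φ b a := by
  unfold OmegaEntry
  rw [min_comm, Nat.dist_comm]

lemma zwM_symm (n p : ℕ) (φ : ℕ → ℝ) (j k : ℕ) : zwM n p φ j k = zwM n p φ k j := by
  unfold zwM
  rw [Nat.dist_comm, zwOmegaEntry_symm p φ (j+1), zwOmegaEntry_symm p φ (n-j)]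
  congr 2
  · exact if_congr and_comm rfl rfl
  · exact if_congr and_comm rfl rfl

lemma zwR_symm (n p : ℕ) (φ : ℕ → ℝ) (j k : ℕ) :
    zwR n p φ k ↑j = zwR n p φ j ↑k := by
  unfold zwR
  congr 1
  · exact Finset.sum_congr rfl fun m _ => mul_comm _ _
  · exact Finset.sum_congr rfl fun m _ => mul_comm _ _

lemma zwClaim1 (p n : ℕ) (hp : 1 ≤ p) (hn : 2*p ≤ n) (φ : ℕ → ℝ)
    (j k : ℕ) (hj : j < n) (hk : k < n) :
    zwM n p φ j k = zwR n p φ k ↑j := by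
  rcases le_total j k with h | h
  · exact zwClaim1_le p n hp hn φ j k hj hk h
  · rw [zwM_symm, zwR_symm]
    exact zwClaim1_le p n hp hn φ k j hk hj h

lemma zwKey (p n : ℕ) (hp : 1 ≤ p) (hn : 2*p ≤ n) (φ γ : ℕ → ℝ)
    (hrec : ∀ k : ℤ, 1 ≤ k →
      γ k.natAbs = ∑ j ∈ Finset.Icc 1 p, φ j * γ (k - (j : ℤ)).natAbs)
    (hnorm : γ 0 - ∑ j ∈ Finset.Icc 1 p, φ j * γ j = 1)
    (i k : ℕ) (hi : i < n) (hk : k < n) :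
    ∑ j ∈ Finset.Ico (0:ℤ) (n:ℤ), γ ((i:ℤ) - j).natAbs * zwR n p φ k j
      = if i = k then 1 else 0 := by
  -- the full-window inner sum equals w
  have hWm : ∀ m : ℤ, ∑ j ∈ Finset.Ico m (m+(p:ℤ)+1), zwC p φ (j - m) * γ ((i:ℤ)-j).natAbs
      = zwW p φ γ ((i:ℤ)-m) := by
    intro m
    have hI : Finset.Ico m (m+(p:ℤ)+1) = Finset.Ico (0+m) (((p:ℤ)+1)+m) := by congr 1 <;> ring
    rw [hI, ← zwSum_shift (fun j => zwC p φ (j - m) * γ ((i:ℤ)-j).natAbs) 0 ((p:ℤ)+1) m]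
    unfold zwW
    refine Finset.sum_congr rfl fun l _ => ?_
    rw [show l + m - m = l by ring]
    have : ((i:ℤ) - (l+m)).natAbs = ((i:ℤ) - m - l).natAbs := by omega
    rw [this]
  -- inner A sums
  have hAm : ∀ m : ℤ, 0 ≤ m → m < (n:ℤ) →
      ∑ j ∈ Finset.Ico (0:ℤ) (n:ℤ), zwC p φ (j - m) * γ ((i:ℤ) - j).natAbs
      = zwW p φ γ ((i:ℤ) - m)
        - ∑ j ∈ Finset.Ico (n:ℤ) (m+(p:ℤ)+1), zwC p φ (j - m) * γ ((i:ℤ)-j).natAbs := by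
    intro m hm0 hmn
    have e1 : ∑ j ∈ Finset.Ico (0:ℤ) (n:ℤ), zwC p φ (j - m) * γ ((i:ℤ) - j).natAbs
        = ∑ j ∈ Finset.Ico m (n:ℤ), zwC p φ (j - m) * γ ((i:ℤ) - j).natAbs := by
      symm
      apply Finset.sum_subset
      · intro x hx; simp only [Finset.mem_Ico] at *; omega
      · intro x hx hx'
        simp only [Finset.mem_Ico] at hx hx'
        rw [zwC_neg p φ (show x - m < 0 by omega), zero_mul]
    rcases le_or_gt (n:ℤ) (m+(p:ℤ)+1) with hcase | hcase
    · have e2 := zwSum_Ico_consec (fun j => zwC p φ (j - m) * γ ((i:ℤ)-j).natAbs)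
        (show m ≤ (n:ℤ) by omega) hcase
      rw [e1, ← hWm m]
      linarith [e2]
    · have e3 : Finset.Ico (n:ℤ) (m+(p:ℤ)+1) = ∅ := Finset.Ico_eq_empty (by omega)
      rw [e3, Finset.sum_empty, sub_zero, e1, ← hWm m]
      symm
      apply Finset.sum_subset
      · intro x hx; simp only [Finset.mem_Ico] at *; omega
      · intro x hx hx'
        simp only [Finset.mem_Ico] at hx hx'
        rw [zwC_big p φ (show (p:ℤ) < x - m by omega), zero_mul]
    -- note: direction check below
  -- inner B sums
  have hBm : ∀ m : ℤ, (n:ℤ) ≤ m → m < (n:ℤ)+(p:ℤ) →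
      ∑ j ∈ Finset.Ico (0:ℤ) (n:ℤ), zwC p φ (m - j) * γ ((i:ℤ) - j).natAbs
      = - ∑ j ∈ Finset.Ico (n:ℤ) (m+1), zwC p φ (m - j) * γ ((i:ℤ)-j).natAbs := by
    intro m hm0 hmn
    have e1 : ∑ j ∈ Finset.Ico (0:ℤ) (n:ℤ), zwC p φ (m - j) * γ ((i:ℤ) - j).natAbs
        = ∑ j ∈ Finset.Ico (m-(p:ℤ)) (n:ℤ), zwC p φ (m - j) * γ ((i:ℤ) - j).natAbs := by
      symm
      apply Finset.sum_subset
      · intro x hx; simp only [Finset.mem_Ico] at *; omega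
      · intro x hx hx'
        simp only [Finset.mem_Ico] at hx hx'
        rw [zwC_big p φ (show (p:ℤ) < m - x by omega), zero_mul]
    have e2 := zwSum_Ico_consec (fun j => zwC p φ (m - j) * γ ((i:ℤ)-j).natAbs)
      (show m-(p:ℤ) ≤ (n:ℤ) by omega) (show (n:ℤ) ≤ m+1 by omega)
    have e3 : ∑ j ∈ Finset.Ico (m-(p:ℤ)) (m+1), zwC p φ (m - j) * γ ((i:ℤ)-j).natAbs
        = zwW p φ γ (m - (i:ℤ)) := by
      have e4 : ∑ j ∈ Finset.Ico (m-(p:ℤ)) (m+1), zwC p φ (m - j) * γ ((i:ℤ)-j).natAbs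
          = ∑ j ∈ Finset.Ico (m-(p:ℤ)) (m+1),
              (fun y => zwC p φ y * γ ((i:ℤ)-m+y).natAbs) (m - j) := by
        refine Finset.sum_congr rfl fun j _ => ?_
        dsimp only
        have : ((i:ℤ)-m+(m-j)).natAbs = ((i:ℤ)-j).natAbs := by omega
        rw [this]
      rw [e4, zwSum_reflect (fun y => zwC p φ y * γ ((i:ℤ)-m+y).natAbs) (m-(p:ℤ)) (m+1) m]
      have hI : Finset.Ico (m-(m+1)+1) (m-(m-(p:ℤ))+1) = Finset.Ico (0:ℤ) ((p:ℤ)+1) := by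
        congr 1 <;> ring
      rw [hI]
      unfold zwW
      refine Finset.sum_congr rfl fun l _ => ?_
      have : ((i:ℤ)-m+l).natAbs = (m-(i:ℤ)-l).natAbs := by omega
      rw [this]
    have e5 : zwW p φ γ (m - (i:ℤ)) = 0 :=
      zwW_pos p φ γ hrec (by omega)
    rw [e1]
    rw [e3, e5] at e2
    linarith [e2]

  -- cross identity
  have hcross : ∀ j : ℤ, (n:ℤ) ≤ j → j < (n:ℤ)+(p:ℤ) →
      ∑ m ∈ Finset.Ico (0:ℤ) (n:ℤ), zwC p φ ((k:ℤ) - m) * zwC p φ (j - m)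
      = ∑ m ∈ Finset.Ico (n:ℤ) ((n:ℤ)+(p:ℤ)), zwC p φ (m - (k:ℤ)) * zwC p φ (m - j) := by
    intro j hj1 hj2
    set t := j - (k:ℤ) with ht
    have e1 : ∑ m ∈ Finset.Ico (0:ℤ) (n:ℤ), zwC p φ ((k:ℤ) - m) * zwC p φ (j - m)
        = ∑ m ∈ Finset.Ico (0:ℤ) (n:ℤ),
            (fun s => zwC p φ s * zwC p φ (s+t)) ((k:ℤ) - m) := by
      refine Finset.sum_congr rfl fun m _ => ?_
      dsimp only
      rw [show (k:ℤ) - m + t = j - m by omega]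
    have e2 : ∑ m ∈ Finset.Ico (n:ℤ) ((n:ℤ)+(p:ℤ)), zwC p φ (m - (k:ℤ)) * zwC p φ (m - j)
        = ∑ m ∈ Finset.Ico (n:ℤ) ((n:ℤ)+(p:ℤ)),
            (fun s => zwC p φ s * zwC p φ (s+t)) (m + (-j)) := by
      refine Finset.sum_congr rfl fun m _ => ?_
      dsimp only
      rw [show m + -j + t = m - (k:ℤ) by omega, show m + -j = m - j by ring]
      ring
    rw [e1, e2, zwSum_reflect (fun s => zwC p φ s * zwC p φ (s+t)) 0 (n:ℤ) (k:ℤ),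
      zwSum_shift (fun s => zwC p φ s * zwC p φ (s+t)) (n:ℤ) ((n:ℤ)+(p:ℤ)) (-j)]
    refine zwSum_support _ (lo := 0) (hi := (p:ℤ)-t+1) ?_ (by omega) (by omega) (by omega) (by omega)
    intro x hfx
    constructor
    · by_contra h
      rw [zwC_neg p φ (by omega), zero_mul] at hfx; exact hfx rfl
    · by_contra h
      rw [zwC_big p φ (show (p:ℤ) < x + t by omega), mul_zero] at hfx; exact hfx rfl
  -- expand the R matrix
  have expand : ∑ j ∈ Finset.Ico (0:ℤ) (n:ℤ), γ ((i:ℤ) - j).natAbs * zwR n p φ k j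
      = (∑ j ∈ Finset.Ico (0:ℤ) (n:ℤ), γ ((i:ℤ) - j).natAbs *
          ∑ m ∈ Finset.Ico (0:ℤ) (n:ℤ), zwC p φ (j - m) * zwC p φ ((k:ℤ) - m))
        - ∑ j ∈ Finset.Ico (0:ℤ) (n:ℤ), γ ((i:ℤ) - j).natAbs *
          ∑ m ∈ Finset.Ico (n:ℤ) ((n:ℤ)+(p:ℤ)), zwC p φ (m - j) * zwC p φ (m - (k:ℤ)) := by
    rw [← Finset.sum_sub_distrib]
    refine Finset.sum_congr rfl fun j _ => ?_
    unfold zwR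
    ring
  have PA : ∑ j ∈ Finset.Ico (0:ℤ) (n:ℤ), γ ((i:ℤ) - j).natAbs *
        ∑ m ∈ Finset.Ico (0:ℤ) (n:ℤ), zwC p φ (j - m) * zwC p φ ((k:ℤ) - m)
      = ∑ m ∈ Finset.Ico (0:ℤ) (n:ℤ), zwC p φ ((k:ℤ) - m) *
          ∑ j ∈ Finset.Ico (0:ℤ) (n:ℤ), zwC p φ (j - m) * γ ((i:ℤ) - j).natAbs := by
    calc ∑ j ∈ Finset.Ico (0:ℤ) (n:ℤ), γ ((i:ℤ) - j).natAbs *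
            ∑ m ∈ Finset.Ico (0:ℤ) (n:ℤ), zwC p φ (j - m) * zwC p φ ((k:ℤ) - m)
        = ∑ j ∈ Finset.Ico (0:ℤ) (n:ℤ), ∑ m ∈ Finset.Ico (0:ℤ) (n:ℤ),
            γ ((i:ℤ) - j).natAbs * (zwC p φ (j - m) * zwC p φ ((k:ℤ) - m)) :=
          Finset.sum_congr rfl fun j _ => Finset.mul_sum _ _ _
      _ = ∑ m ∈ Finset.Ico (0:ℤ) (n:ℤ), ∑ j ∈ Finset.Ico (0:ℤ) (n:ℤ),
            γ ((i:ℤ) - j).natAbs * (zwC p φ (j - m) * zwC p φ ((k:ℤ) - m)) :=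
          Finset.sum_comm
      _ = _ := by
          refine Finset.sum_congr rfl fun m _ => ?_
          rw [Finset.mul_sum]
          exact Finset.sum_congr rfl fun j _ => by ring
  have PB : ∑ j ∈ Finset.Ico (0:ℤ) (n:ℤ), γ ((i:ℤ) - j).natAbs *
        ∑ m ∈ Finset.Ico (n:ℤ) ((n:ℤ)+(p:ℤ)), zwC p φ (m - j) * zwC p φ (m - (k:ℤ))
      = ∑ m ∈ Finset.Ico (n:ℤ) ((n:ℤ)+(p:ℤ)), zwC p φ (m - (k:ℤ)) *
          ∑ j ∈ Finset.Ico (0:ℤ) (n:ℤ), zwC p φ (m - j) * γ ((i:ℤ) - j).natAbs := by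
    calc ∑ j ∈ Finset.Ico (0:ℤ) (n:ℤ), γ ((i:ℤ) - j).natAbs *
            ∑ m ∈ Finset.Ico (n:ℤ) ((n:ℤ)+(p:ℤ)), zwC p φ (m - j) * zwC p φ (m - (k:ℤ))
        = ∑ j ∈ Finset.Ico (0:ℤ) (n:ℤ), ∑ m ∈ Finset.Ico (n:ℤ) ((n:ℤ)+(p:ℤ)),
            γ ((i:ℤ) - j).natAbs * (zwC p φ (m - j) * zwC p φ (m - (k:ℤ))) :=
          Finset.sum_congr rfl fun j _ => Finset.mul_sum _ _ _
      _ = ∑ m ∈ Finset.Ico (n:ℤ) ((n:ℤ)+(p:ℤ)), ∑ j ∈ Finset.Ico (0:ℤ) (n:ℤ),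
            γ ((i:ℤ) - j).natAbs * (zwC p φ (m - j) * zwC p φ (m - (k:ℤ))) :=
          Finset.sum_comm
      _ = _ := by
          refine Finset.sum_congr rfl fun m _ => ?_
          rw [Finset.mul_sum]
          exact Finset.sum_congr rfl fun j _ => by ring
  have PA2 : ∑ m ∈ Finset.Ico (0:ℤ) (n:ℤ), zwC p φ ((k:ℤ) - m) *
        ∑ j ∈ Finset.Ico (0:ℤ) (n:ℤ), zwC p φ (j - m) * γ ((i:ℤ) - j).natAbs
      = (∑ m ∈ Finset.Ico (0:ℤ) (n:ℤ), zwC p φ ((k:ℤ) - m) * zwW p φ γ ((i:ℤ) - m))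
        - ∑ m ∈ Finset.Ico (0:ℤ) (n:ℤ), zwC p φ ((k:ℤ) - m) *
            ∑ j ∈ Finset.Ico (n:ℤ) (m+(p:ℤ)+1), zwC p φ (j - m) * γ ((i:ℤ)-j).natAbs := by
    rw [← Finset.sum_sub_distrib]
    refine Finset.sum_congr rfl fun m hm => ?_
    simp only [Finset.mem_Ico] at hm
    rw [hAm m hm.1 hm.2]
    ring
  have PB2 : ∑ m ∈ Finset.Ico (n:ℤ) ((n:ℤ)+(p:ℤ)), zwC p φ (m - (k:ℤ)) *
        ∑ j ∈ Finset.Ico (0:ℤ) (n:ℤ), zwC p φ (m - j) * γ ((i:ℤ) - j).natAbs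
      = - ∑ m ∈ Finset.Ico (n:ℤ) ((n:ℤ)+(p:ℤ)), zwC p φ (m - (k:ℤ)) *
            ∑ j ∈ Finset.Ico (n:ℤ) (m+1), zwC p φ (m - j) * γ ((i:ℤ)-j).natAbs := by
    rw [← Finset.sum_neg_distrib]
    refine Finset.sum_congr rfl fun m hm => ?_
    simp only [Finset.mem_Ico] at hm
    rw [hBm m hm.1 hm.2]
    ring
  have T1 : ∑ m ∈ Finset.Ico (0:ℤ) (n:ℤ), zwC p φ ((k:ℤ) - m) * zwW p φ γ ((i:ℤ) - m)
      = if i = k then 1 else 0 := by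
    have hsupp : ∀ x : ℤ, zwC p φ ((k:ℤ) - x) * zwW p φ γ ((i:ℤ) - x) ≠ 0 →
        ((i:ℤ) ≤ x ∧ (k:ℤ)-(p:ℤ) ≤ x ∧ x < (k:ℤ)+1) := by
      intro x hfx
      refine ⟨?_, ?_, ?_⟩
      · by_contra h
        rw [zwW_pos p φ γ hrec (by omega), mul_zero] at hfx; exact hfx rfl
      · by_contra h
        rw [zwC_big p φ (show (p:ℤ) < (k:ℤ) - x by omega), zero_mul] at hfx; exact hfx rfl
      · by_contra h
        rw [zwC_neg p φ (show (k:ℤ) - x < 0 by omega), zero_mul] at hfx; exact hfx rfl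
    have step : ∑ m ∈ Finset.Ico (0:ℤ) (n:ℤ), zwC p φ ((k:ℤ) - m) * zwW p φ γ ((i:ℤ) - m)
        = ∑ m ∈ Finset.Ico ((k:ℤ)-(p:ℤ)) ((k:ℤ)+1), zwC p φ ((k:ℤ) - m) * zwW p φ γ ((i:ℤ) - m) := by
      rcases le_total ((i:ℤ)) ((k:ℤ)-(p:ℤ)) with hcase | hcase
      · exact zwSum_support _ (lo := (k:ℤ)-(p:ℤ)) (hi := (k:ℤ)+1)
          (fun x hx => ⟨(hsupp x hx).2.1, (hsupp x hx).2.2⟩)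
          (by omega) (by omega) (by omega) (by omega)
      · exact zwSum_support _ (lo := (i:ℤ)) (hi := (k:ℤ)+1)
          (fun x hx => ⟨(hsupp x hx).1, (hsupp x hx).2.2⟩)
          (by omega) (by omega) (by omega) (by omega)
    have e1 : ∑ m ∈ Finset.Ico ((k:ℤ)-(p:ℤ)) ((k:ℤ)+1), zwC p φ ((k:ℤ) - m) * zwW p φ γ ((i:ℤ) - m)
        = ∑ m ∈ Finset.Ico ((k:ℤ)-(p:ℤ)) ((k:ℤ)+1),
            (fun l => zwC p φ l * zwW p φ γ ((i:ℤ)-(k:ℤ)+l)) ((k:ℤ) - m) := by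
      refine Finset.sum_congr rfl fun m _ => ?_
      dsimp only
      rw [show (i:ℤ)-(k:ℤ)+((k:ℤ)-m) = (i:ℤ)-m by ring]
    rw [step, e1, zwSum_reflect (fun l => zwC p φ l * zwW p φ γ ((i:ℤ)-(k:ℤ)+l))
      ((k:ℤ)-(p:ℤ)) ((k:ℤ)+1) (k:ℤ)]
    have hI : Finset.Ico ((k:ℤ)-((k:ℤ)+1)+1) ((k:ℤ)-((k:ℤ)-(p:ℤ))+1) = Finset.Ico (0:ℤ) ((p:ℤ)+1) := by
      congr 1 <;> ring
    rw [hI]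
    have : ∑ l ∈ Finset.Ico (0:ℤ) ((p:ℤ)+1), zwC p φ l * zwW p φ γ ((i:ℤ)-(k:ℤ)+l)
        = zwH p φ γ ((i:ℤ)-(k:ℤ)) := rfl
    rw [this, zwH_delta p hp φ γ hrec hnorm]
    by_cases h : i = k
    · rw [if_pos (by omega), if_pos h]
    · rw [if_neg (by omega), if_neg h]
  have T23 : ∑ m ∈ Finset.Ico (0:ℤ) (n:ℤ), zwC p φ ((k:ℤ) - m) *
        ∑ j ∈ Finset.Ico (n:ℤ) (m+(p:ℤ)+1), zwC p φ (j - m) * γ ((i:ℤ)-j).natAbs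
      = ∑ m ∈ Finset.Ico (n:ℤ) ((n:ℤ)+(p:ℤ)), zwC p φ (m - (k:ℤ)) *
          ∑ j ∈ Finset.Ico (n:ℤ) (m+1), zwC p φ (m - j) * γ ((i:ℤ)-j).natAbs := by
    have L1 : ∀ m : ℤ, 0 ≤ m → m < (n:ℤ) →
        ∑ j ∈ Finset.Ico (n:ℤ) (m+(p:ℤ)+1), zwC p φ (j - m) * γ ((i:ℤ)-j).natAbs
        = ∑ j ∈ Finset.Ico (n:ℤ) ((n:ℤ)+(p:ℤ)), zwC p φ (j - m) * γ ((i:ℤ)-j).natAbs := by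
      intro m hm0 hmn
      apply Finset.sum_subset
      · intro x hx; simp only [Finset.mem_Ico] at *; omega
      · intro x hx hx'
        simp only [Finset.mem_Ico] at hx hx'
        rw [zwC_big p φ (show (p:ℤ) < x - m by omega), zero_mul]
    have R1 : ∀ m : ℤ, (n:ℤ) ≤ m → m < (n:ℤ)+(p:ℤ) →
        ∑ j ∈ Finset.Ico (n:ℤ) (m+1), zwC p φ (m - j) * γ ((i:ℤ)-j).natAbs
        = ∑ j ∈ Finset.Ico (n:ℤ) ((n:ℤ)+(p:ℤ)), zwC p φ (m - j) * γ ((i:ℤ)-j).natAbs := by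
      intro m hm0 hmn
      apply Finset.sum_subset
      · intro x hx; simp only [Finset.mem_Ico] at *; omega
      · intro x hx hx'
        simp only [Finset.mem_Ico] at hx hx'
        rw [zwC_neg p φ (show m - x < 0 by omega), zero_mul]
    calc ∑ m ∈ Finset.Ico (0:ℤ) (n:ℤ), zwC p φ ((k:ℤ) - m) *
            ∑ j ∈ Finset.Ico (n:ℤ) (m+(p:ℤ)+1), zwC p φ (j - m) * γ ((i:ℤ)-j).natAbs
        = ∑ m ∈ Finset.Ico (0:ℤ) (n:ℤ), ∑ j ∈ Finset.Ico (n:ℤ) ((n:ℤ)+(p:ℤ)),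
            zwC p φ ((k:ℤ) - m) * (zwC p φ (j - m) * γ ((i:ℤ)-j).natAbs) := by
          refine Finset.sum_congr rfl fun m hm => ?_
          simp only [Finset.mem_Ico] at hm
          rw [L1 m hm.1 hm.2, Finset.mul_sum]
      _ = ∑ j ∈ Finset.Ico (n:ℤ) ((n:ℤ)+(p:ℤ)), ∑ m ∈ Finset.Ico (0:ℤ) (n:ℤ),
            zwC p φ ((k:ℤ) - m) * (zwC p φ (j - m) * γ ((i:ℤ)-j).natAbs) :=
          Finset.sum_comm
      _ = ∑ j ∈ Finset.Ico (n:ℤ) ((n:ℤ)+(p:ℤ)), ∑ m ∈ Finset.Ico (n:ℤ) ((n:ℤ)+(p:ℤ)),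
            zwC p φ (m - (k:ℤ)) * (zwC p φ (m - j) * γ ((i:ℤ)-j).natAbs) := by
          refine Finset.sum_congr rfl fun j hj => ?_
          simp only [Finset.mem_Ico] at hj
          have h1 : ∑ m ∈ Finset.Ico (0:ℤ) (n:ℤ),
              zwC p φ ((k:ℤ) - m) * (zwC p φ (j - m) * γ ((i:ℤ)-j).natAbs)
              = (∑ m ∈ Finset.Ico (0:ℤ) (n:ℤ), zwC p φ ((k:ℤ) - m) * zwC p φ (j - m))
                  * γ ((i:ℤ)-j).natAbs := by
            rw [Finset.sum_mul]
            exact Finset.sum_congr rfl fun m _ => by ring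
          have h2 : ∑ m ∈ Finset.Ico (n:ℤ) ((n:ℤ)+(p:ℤ)),
              zwC p φ (m - (k:ℤ)) * (zwC p φ (m - j) * γ ((i:ℤ)-j).natAbs)
              = (∑ m ∈ Finset.Ico (n:ℤ) ((n:ℤ)+(p:ℤ)), zwC p φ (m - (k:ℤ)) * zwC p φ (m - j))
                  * γ ((i:ℤ)-j).natAbs := by
            rw [Finset.sum_mul]
            exact Finset.sum_congr rfl fun m _ => by ring
          rw [h1, h2, hcross j hj.1 hj.2]
      _ = ∑ m ∈ Finset.Ico (n:ℤ) ((n:ℤ)+(p:ℤ)), ∑ j ∈ Finset.Ico (n:ℤ) ((n:ℤ)+(p:ℤ)),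
            zwC p φ (m - (k:ℤ)) * (zwC p φ (m - j) * γ ((i:ℤ)-j).natAbs) :=
          Finset.sum_comm
      _ = _ := by
          refine Finset.sum_congr rfl fun m hm => ?_
          simp only [Finset.mem_Ico] at hm
          rw [R1 m hm.1 hm.2, Finset.mul_sum]
  rw [expand, PA, PB, PA2, PB2, T23, T1]
  ring



/-- The Zinde-Walsh inverse formula (eq. (8)): if `γ` satisfies the Yule–Walker
recursions `γ_k = Σ_{j=1}^{p} φ_j γ_{k−j}` for all integers `k ≥ 1` (with
`γ_{−k} = γ_k`) and the unit-innovation-variance normalization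
`γ₀ − Σ_{j=1}^{p} φ_j γ_j = 1`, and `n ≥ 2p`, then `Γₙ · (Γ̇ₙ − Ω) = Iₙ`;
that is, the inverse of the AR(p) covariance matrix is `Γₙ⁻¹ = Γ̇ₙ − Ω`. -/
theorem zindeWalsh_inverse (p n : ℕ) (hp : 1 ≤ p) (hn : 2 * p ≤ n)
    (φ γ : ℕ → ℝ)
    (hrec : ∀ k : ℤ, 1 ≤ k →
      γ k.natAbs = ∑ j ∈ Finset.Icc 1 p, φ j * γ (k - (j : ℤ)).natAbs)
    (hnorm : γ 0 - ∑ j ∈ Finset.Icc 1 p, φ j * γ j = 1) :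
    toeplitzCov γ n * (GammaDot n p φ - OmegaMat n p φ) = 1 := by
  ext i k
  rw [Matrix.mul_apply, Matrix.one_apply]
  calc ∑ j : Fin n, toeplitzCov γ n i j * (GammaDot n p φ - OmegaMat n p φ) j k
      = ∑ j : Fin n,
          (fun (jv : ℕ) => γ (((i.val:ℤ) - (jv:ℤ)).natAbs) * zwM n p φ jv k.val) j.val := by
        refine Finset.sum_congr rfl fun j _ => ?_
        have hdist : Nat.dist i.val j.val = ((i.val:ℤ) - (j.val:ℤ)).natAbs := by
          simp [Nat.dist]; omega
        simp only [toeplitzCov, GammaDot, OmegaMat, Matrix.sub_apply, Matrix.of_apply, zwM]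
        rw [hdist]
    _ = ∑ j ∈ Finset.range n, γ (((i.val:ℤ) - (j:ℤ)).natAbs) * zwM n p φ j k.val :=
        by exact Fin.sum_univ_eq_sum_range (fun jv => γ (((i.val:ℤ) - (jv:ℤ)).natAbs) * zwM n p φ jv k.val) n
    _ = ∑ j ∈ Finset.range n,
          (fun x : ℤ => γ (((i.val:ℤ) - x).natAbs) * zwR n p φ k.val x) ((j:ℕ):ℤ) := by
        refine Finset.sum_congr rfl fun j hj => ?_
        simp only [Finset.mem_range] at hj
        dsimp only
        rw [zwClaim1 p n hp hn φ j k.val hj k.isLt]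
    _ = ∑ j ∈ Finset.Ico (0:ℤ) (n:ℤ), γ (((i.val:ℤ) - j).natAbs) * zwR n p φ k.val j := by
        rw [Finset.range_eq_Ico]
        rw [show Finset.Ico (0:ℤ) (n:ℤ) = Finset.Ico ((0:ℕ):ℤ) ((n:ℕ):ℤ) by norm_num]
        exact (zwSum_cast (fun x => γ (((i.val:ℤ) - x).natAbs) * zwR n p φ k.val x) 0 n).symm
    _ = if i.val = k.val then 1 else 0 :=
        zwKey p n hp hn φ γ hrec hnorm i.val k.val i.isLt k.isLt
    _ = if i = k then 1 else 0 := by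
        by_cases h : i = k
        · rw [if_pos (by rw [h]), if_pos h]
        · rw [if_neg (fun hh => h (Fin.ext hh)), if_neg h]
end
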